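/- Assume ρ₀ ≠ 0 and that S(x,t) ∩ supp ρ₀ is nonempty for every x ∈ ℝ and every t > 0. Then for each fixed t > 0 the map x ↦ y_*(x,t) = inf(S(x,t) ∩ supp ρ₀) is nondecreasing: y_*(x₁,t) ≤ y_*(x₂,t) whenever x₁ < x₂. -/

import Mathlib

open MeasureTheory Set Filter Topology

noncomputable def Mtot (ρ : Measure ℝ) : ℝ := (ρ Set.univ).toReal

noncomputable def m0 (ρ : Measure ℝ) (y : ℝ) : ℝ := (ρ (Set.Iio y)).toReal

noncomputable def m0p (ρ : Measure ℝ) (y : ℝ) : ℝ := (ρ (Set.Iic y)).toReal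

/-- `m̃₀(y) = (1/2)(ρ((−∞,y)) + ρ((−∞,y]) − M)`. -/
noncomputable def mtilde (ρ : Measure ℝ) (y : ℝ) : ℝ :=
  (m0 ρ y + m0p ρ y - Mtot ρ) / 2

/-- topological support of the measure. -/
def msupp (ρ : Measure ℝ) : Set ℝ := {x | ∀ U ∈ nhds x, 0 < ρ U}

/-- The generalized potential `F(y;x,t)`. -/
noncomputable def Fpot (ρ : Measure ℝ) (u₀ : ℝ → ℝ) (τ y x t : ℝ) : ℝ :=
  ∫ η in Set.Iio y,
    (η + u₀ η * (τ * (1 - Real.exp (-t / τ)))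
       + mtilde ρ η * (τ ^ 2 - τ ^ 2 * Real.exp (-t / τ) - τ * t) - x) ∂ρ

/-- The right-limit value `F(y+;x,t)` (integral over `(−∞,y]`). -/
noncomputable def FpotP (ρ : Measure ℝ) (u₀ : ℝ → ℝ) (τ y x t : ℝ) : ℝ :=
  ∫ η in Set.Iic y,
    (η + u₀ η * (τ * (1 - Real.exp (-t / τ)))
       + mtilde ρ η * (τ ^ 2 - τ ^ 2 * Real.exp (-t / τ) - τ * t) - x) ∂ρ

/-- `ν(x,t) = inf_y F(y;x,t)`. -/
noncomputable def nuEP (ρ : Measure ℝ) (u₀ : ℝ → ℝ) (τ x t : ℝ) : ℝ :=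
  ⨅ y : ℝ, Fpot ρ u₀ τ y x t

/-- `S(x,t)`: points approachable by sequences along which `F` tends to `ν(x,t)`. -/
def Sset (ρ : Measure ℝ) (u₀ : ℝ → ℝ) (τ x t : ℝ) : Set ℝ :=
  {y | ∃ yn : ℕ → ℝ, Tendsto yn atTop (𝓝 y) ∧
    Tendsto (fun n => Fpot ρ u₀ τ (yn n) x t) atTop (𝓝 (nuEP ρ u₀ τ x t))}

/-- `y_*(x,t) = inf (S(x,t) ∩ supp ρ₀)`. -/
noncomputable def ystar (ρ : Measure ℝ) (u₀ : ℝ → ℝ) (τ x t : ℝ) : ℝ :=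
  sInf (Sset ρ u₀ τ x t ∩ msupp ρ)

/-- initial speed `c(y;x,t)` of the characteristic connecting `(y,0)` and `(x,t)`. -/
noncomputable def cspeed (ρ : Measure ℝ) (τ y x t : ℝ) : ℝ :=
  (x - y) / (τ * (1 - Real.exp (-t / τ)))
    - mtilde ρ y * (τ - t / (1 - Real.exp (-t / τ)))

lemma m0_mono (ρ : Measure ℝ) [IsFiniteMeasure ρ] : Monotone (m0 ρ) := fun a b h =>
  ENNReal.toReal_mono (measure_ne_top _ _) (measure_mono (Iio_subset_Iio h))

lemma m0p_mono (ρ : Measure ℝ) [IsFiniteMeasure ρ] : Monotone (m0p ρ) := fun a b h =>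
  ENNReal.toReal_mono (measure_ne_top _ _) (measure_mono (Iic_subset_Iic.mpr h))

lemma m0_nonneg (ρ : Measure ℝ) (y : ℝ) : 0 ≤ m0 ρ y := ENNReal.toReal_nonneg

lemma m0_le_Mtot (ρ : Measure ℝ) [IsFiniteMeasure ρ] (y : ℝ) : m0 ρ y ≤ Mtot ρ :=
  ENNReal.toReal_mono (measure_ne_top _ _) (measure_mono (subset_univ _))

lemma m0p_le_Mtot (ρ : Measure ℝ) [IsFiniteMeasure ρ] (y : ℝ) : m0p ρ y ≤ Mtot ρ :=
  ENNReal.toReal_mono (measure_ne_top _ _) (measure_mono (subset_univ _))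

lemma Mtot_nonneg (ρ : Measure ℝ) : 0 ≤ Mtot ρ := ENNReal.toReal_nonneg

lemma mtilde_abs_le (ρ : Measure ℝ) [IsFiniteMeasure ρ] (y : ℝ) : |mtilde ρ y| ≤ Mtot ρ := by
  have h1 := m0_nonneg ρ y
  have h2 := m0_le_Mtot ρ y
  have h3 : 0 ≤ m0p ρ y := ENNReal.toReal_nonneg
  have h4 := m0p_le_Mtot ρ y
  have h5 := Mtot_nonneg ρ
  rw [abs_le]
  constructor <;> (unfold mtilde; linarith)

lemma mtilde_meas (ρ : Measure ℝ) [IsFiniteMeasure ρ] : Measurable (mtilde ρ) :=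
  (((m0_mono ρ).measurable.add (m0p_mono ρ).measurable).sub measurable_const).div_const 2

noncomputable def gg (ρ : Measure ℝ) (u₀ : ℝ → ℝ) (τ t η : ℝ) : ℝ :=
  η + u₀ η * (τ * (1 - Real.exp (-t / τ)))
    + mtilde ρ η * (τ ^ 2 - τ ^ 2 * Real.exp (-t / τ) - τ * t)

lemma Fpot_eq (ρ : Measure ℝ) (u₀ : ℝ → ℝ) (τ y x t : ℝ) :
    Fpot ρ u₀ τ y x t = ∫ η in Set.Iio y, (gg ρ u₀ τ t η - x) ∂ρ := rfl

lemma gg_int (ρ : Measure ℝ) [IsFiniteMeasure ρ] (u₀ : ℝ → ℝ) (U₀ τ t : ℝ)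
    (hmom : Integrable (fun η : ℝ => η) ρ) (humeas : Measurable u₀)
    (hu : ∀ᵐ η ∂ρ, |u₀ η| ≤ U₀) : Integrable (gg ρ u₀ τ t) ρ := by
  set c₁ : ℝ := τ * (1 - Real.exp (-t / τ))
  set c₂ : ℝ := τ ^ 2 - τ ^ 2 * Real.exp (-t / τ) - τ * t
  have h1 : Integrable (fun η => u₀ η * c₁) ρ := by
    refine (integrable_const (|U₀| * |c₁|)).mono'
      ((humeas.mul_const c₁).aestronglyMeasurable) ?_
    filter_upwards [hu] with η hη
    rw [Real.norm_eq_abs, abs_mul]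
    exact mul_le_mul_of_nonneg_right (le_trans hη (le_abs_self U₀)) (abs_nonneg _)
  have h2 : Integrable (fun η => mtilde ρ η * c₂) ρ := by
    refine (integrable_const (Mtot ρ * |c₂|)).mono'
      (((mtilde_meas ρ).mul_const c₂).aestronglyMeasurable) ?_
    refine Eventually.of_forall fun η => ?_
    rw [Real.norm_eq_abs, abs_mul]
    exact mul_le_mul_of_nonneg_right (mtilde_abs_le ρ η) (abs_nonneg _)
  exact (hmom.add h1).add h2

lemma Fpot_int (ρ : Measure ℝ) [IsFiniteMeasure ρ] (u₀ : ℝ → ℝ) (U₀ τ t x : ℝ)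
    (hmom : Integrable (fun η : ℝ => η) ρ) (humeas : Measurable u₀)
    (hu : ∀ᵐ η ∂ρ, |u₀ η| ≤ U₀) : Integrable (fun η => gg ρ u₀ τ t η - x) ρ :=
  (gg_int ρ u₀ U₀ τ t hmom humeas hu).sub (integrable_const x)

lemma Fpot_shift (ρ : Measure ℝ) [IsFiniteMeasure ρ] (u₀ : ℝ → ℝ) (U₀ τ t x₁ x₂ y : ℝ)
    (hmom : Integrable (fun η : ℝ => η) ρ) (humeas : Measurable u₀)
    (hu : ∀ᵐ η ∂ρ, |u₀ η| ≤ U₀) :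
    Fpot ρ u₀ τ y x₂ t = Fpot ρ u₀ τ y x₁ t - (x₂ - x₁) * m0 ρ y := by
  rw [Fpot_eq, Fpot_eq]
  have h1 : ∀ η : ℝ, gg ρ u₀ τ t η - x₂ = (gg ρ u₀ τ t η - x₁) - (x₂ - x₁) := fun η => by ring
  simp_rw [h1]
  rw [integral_sub ((Fpot_int ρ u₀ U₀ τ t x₁ hmom humeas hu).integrableOn)
    (integrableOn_const (measure_lt_top _ _).ne)]
  rw [setIntegral_const, smul_eq_mul, measureReal_def]
  unfold m0; ring

lemma Fpot_lb (ρ : Measure ℝ) [IsFiniteMeasure ρ] (u₀ : ℝ → ℝ) (U₀ τ t x : ℝ)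
    (hmom : Integrable (fun η : ℝ => η) ρ) (humeas : Measurable u₀)
    (hu : ∀ᵐ η ∂ρ, |u₀ η| ≤ U₀) (y : ℝ) :
    -(∫ η, ‖gg ρ u₀ τ t η - x‖ ∂ρ) ≤ Fpot ρ u₀ τ y x t := by
  have hint := Fpot_int ρ u₀ U₀ τ t x hmom humeas hu
  rw [Fpot_eq]
  have h1 : ‖∫ η in Set.Iio y, (gg ρ u₀ τ t η - x) ∂ρ‖
      ≤ ∫ η in Set.Iio y, ‖gg ρ u₀ τ t η - x‖ ∂ρ := norm_integral_le_integral_norm _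
  have h2 : ∫ η in Set.Iio y, ‖gg ρ u₀ τ t η - x‖ ∂ρ ≤ ∫ η, ‖gg ρ u₀ τ t η - x‖ ∂ρ :=
    setIntegral_le_integral hint.norm (Eventually.of_forall fun η => norm_nonneg _)
  have h3 := (abs_le.mp ((Real.norm_eq_abs _ ▸ h1).trans h2)).1
  linarith

lemma nu_le (ρ : Measure ℝ) [IsFiniteMeasure ρ] (u₀ : ℝ → ℝ) (U₀ τ t x : ℝ)
    (hmom : Integrable (fun η : ℝ => η) ρ) (humeas : Measurable u₀)
    (hu : ∀ᵐ η ∂ρ, |u₀ η| ≤ U₀) (z : ℝ) :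
    nuEP ρ u₀ τ x t ≤ Fpot ρ u₀ τ z x t :=
  ciInf_le ⟨-(∫ η, ‖gg ρ u₀ τ t η - x‖ ∂ρ), by
    rintro _ ⟨y, rfl⟩; exact Fpot_lb ρ u₀ U₀ τ t x hmom humeas hu y⟩ z

lemma tail_tendsto (ρ : Measure ℝ) [IsFiniteMeasure ρ] (u₀ : ℝ → ℝ) (U₀ τ t x : ℝ)
    (hmom : Integrable (fun η : ℝ => η) ρ) (humeas : Measurable u₀)
    (hu : ∀ᵐ η ∂ρ, |u₀ η| ≤ U₀) :
    Tendsto (fun n : ℕ => ∫ η in Set.Iio (-(n : ℝ)), ‖gg ρ u₀ τ t η - x‖ ∂ρ)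
      atTop (𝓝 0) := by
  have hint := (Fpot_int ρ u₀ U₀ τ t x hmom humeas hu).norm
  have h := tendsto_setIntegral_of_antitone (μ := ρ)
    (f := fun η => ‖gg ρ u₀ τ t η - x‖) (s := fun n : ℕ => Set.Iio (-(n : ℝ)))
    (fun _ => measurableSet_Iio)
    (fun a b hab => Iio_subset_Iio (neg_le_neg (Nat.cast_le.mpr hab)))
    ⟨0, hint.integrableOn⟩
  have he : ⋂ n : ℕ, Set.Iio (-(n : ℝ)) = (∅ : Set ℝ) := by
    ext z
    simp only [mem_iInter, mem_Iio, mem_empty_iff_false, iff_false, not_forall, not_lt]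
    obtain ⟨n, hn⟩ := exists_nat_gt (-z)
    exact ⟨n, by linarith⟩
  rwa [he, setIntegral_empty] at h

lemma gg_bound (ρ : Measure ℝ) [IsFiniteMeasure ρ] (u₀ : ℝ → ℝ) (U₀ τ t x : ℝ)
    (hu : ∀ᵐ η ∂ρ, |u₀ η| ≤ U₀) :
    ∀ᵐ η ∂ρ, gg ρ u₀ τ t η - x
      ≤ η + (|x| + |τ * (1 - Real.exp (-t / τ))| * |U₀|
          + |τ ^ 2 - τ ^ 2 * Real.exp (-t / τ) - τ * t| * Mtot ρ) := by
  filter_upwards [hu] with η hη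
  have h1 : u₀ η * (τ * (1 - Real.exp (-t / τ)))
      ≤ |τ * (1 - Real.exp (-t / τ))| * |U₀| := by
    calc u₀ η * (τ * (1 - Real.exp (-t / τ))) ≤ |u₀ η * (τ * (1 - Real.exp (-t / τ)))| :=
          le_abs_self _
    _ = |τ * (1 - Real.exp (-t / τ))| * |u₀ η| := by rw [abs_mul]; ring
    _ ≤ |τ * (1 - Real.exp (-t / τ))| * |U₀| :=
        mul_le_mul_of_nonneg_left (hη.trans (le_abs_self _)) (abs_nonneg _)
  have h2 : mtilde ρ η * (τ ^ 2 - τ ^ 2 * Real.exp (-t / τ) - τ * t)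
      ≤ |τ ^ 2 - τ ^ 2 * Real.exp (-t / τ) - τ * t| * Mtot ρ := by
    calc mtilde ρ η * (τ ^ 2 - τ ^ 2 * Real.exp (-t / τ) - τ * t)
        ≤ |mtilde ρ η * (τ ^ 2 - τ ^ 2 * Real.exp (-t / τ) - τ * t)| := le_abs_self _
    _ = |τ ^ 2 - τ ^ 2 * Real.exp (-t / τ) - τ * t| * |mtilde ρ η| := by rw [abs_mul]; ring
    _ ≤ |τ ^ 2 - τ ^ 2 * Real.exp (-t / τ) - τ * t| * Mtot ρ :=
        mul_le_mul_of_nonneg_left (mtilde_abs_le ρ η) (abs_nonneg _)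
  have h3 : -x ≤ |x| := neg_le_abs x
  unfold gg
  linarith

lemma Sbdd (ρ : Measure ℝ) [IsFiniteMeasure ρ] (u₀ : ℝ → ℝ) (U₀ τ t x : ℝ)
    (hmom : Integrable (fun η : ℝ => η) ρ) (humeas : Measurable u₀)
    (hu : ∀ᵐ η ∂ρ, |u₀ η| ≤ U₀) :
    BddBelow (Sset ρ u₀ τ x t ∩ msupp ρ) := by
  set G : ℝ → ℝ := fun η => gg ρ u₀ τ t η - x with hG
  have hint : Integrable G ρ := Fpot_int ρ u₀ U₀ τ t x hmom humeas hu
  set K : ℝ := |x| + |τ * (1 - Real.exp (-t / τ))| * |U₀|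
      + |τ ^ 2 - τ ^ 2 * Real.exp (-t / τ) - τ * t| * Mtot ρ with hK
  have hGb : ∀ᵐ η ∂ρ, G η ≤ η + K := gg_bound ρ u₀ U₀ τ t x hu
  set ν : ℝ := nuEP ρ u₀ τ x t with hν
  by_cases hsign : ν < 0
  · -- choose N with tail < -ν/2
    obtain ⟨N, hN⟩ := (tail_tendsto ρ u₀ U₀ τ t x hmom humeas hu).eventually
      (eventually_lt_nhds (show (0:ℝ) < -ν/2 by linarith)) |>.exists
    refine ⟨-(N:ℝ) - 1, fun y hy => ?_⟩
    by_contra hlt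
    push_neg at hlt
    obtain ⟨⟨z, hz, hFz⟩, _⟩ := hy
    have hev : ∀ᶠ n in atTop, z n < -(N:ℝ) :=
      hz.eventually (Filter.Tendsto.eventually_lt_const (by linarith) tendsto_id)
    have hge : ∀ᶠ n in atTop, ν / 2 ≤ Fpot ρ u₀ τ (z n) x t := by
      filter_upwards [hev] with n hn
      have h1 : ‖∫ η in Set.Iio (z n), G η ∂ρ‖ ≤ ∫ η in Set.Iio (z n), ‖G η‖ ∂ρ :=
        norm_integral_le_integral_norm _
      have h2 : ∫ η in Set.Iio (z n), ‖G η‖ ∂ρ ≤ ∫ η in Set.Iio (-(N:ℝ)), ‖G η‖ ∂ρ :=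
        setIntegral_mono_set hint.norm.integrableOn
          (Eventually.of_forall fun η => norm_nonneg _)
          (HasSubset.Subset.eventuallyLE (Iio_subset_Iio hn.le))
      have h3 := (abs_le.mp ((Real.norm_eq_abs _ ▸ h1).trans (h2.trans hN.le))).1
      rw [Fpot_eq]
      linarith
    have := ge_of_tendsto hFz hge
    linarith
  · push_neg at hsign
    refine ⟨-K - 2, fun y hy => ?_⟩
    by_contra hlt
    push_neg at hlt
    obtain ⟨_, hysupp⟩ := hy
    have hmem : Set.Ioo (y - 1) (y + 1) ∈ nhds y :=
      isOpen_Ioo.mem_nhds (by constructor <;> linarith)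
    have hmpos : 0 < ρ (Set.Iio (y + 1)) :=
      lt_of_lt_of_le (hysupp _ hmem) (measure_mono fun w hw => hw.2)
    have hFy' : Fpot ρ u₀ τ (y + 1) x t ≤ ∫ _ in Set.Iio (y + 1), (-1 : ℝ) ∂ρ := by
      rw [Fpot_eq]
      refine setIntegral_mono_ae_restrict hint.integrableOn
        (integrableOn_const (measure_lt_top _ _).ne) ?_
      filter_upwards [ae_restrict_of_ae hGb, ae_restrict_mem measurableSet_Iio]
        with η h1 h2
      have : η < y + 1 := h2
      have h1' : gg ρ u₀ τ t η - x ≤ η + K := h1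
      linarith
    rw [setIntegral_const, smul_eq_mul, measureReal_def] at hFy'
    have htr : 0 < (ρ (Set.Iio (y + 1))).toReal :=
      ENNReal.toReal_pos hmpos.ne' (measure_ne_top _ _)
    have := nu_le ρ u₀ U₀ τ t x hmom humeas hu (y + 1)
    nlinarith

lemma swap_lemma (ρ : Measure ℝ) [IsFiniteMeasure ρ] (u₀ : ℝ → ℝ) (U₀ τ t x₁ x₂ a b : ℝ)
    (hmom : Integrable (fun η : ℝ => η) ρ) (humeas : Measurable u₀)
    (hu : ∀ᵐ η ∂ρ, |u₀ η| ≤ U₀) (hx : x₁ < x₂) (hba : b < a)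
    (ha : a ∈ Sset ρ u₀ τ x₁ t) (hb : b ∈ Sset ρ u₀ τ x₂ t) :
    b ∈ Sset ρ u₀ τ x₁ t := by
  obtain ⟨p, hp, hFp⟩ := ha
  obtain ⟨q, hq, hFq⟩ := hb
  set ν₁ : ℝ := nuEP ρ u₀ τ x₁ t with hν₁
  set ν₂ : ℝ := nuEP ρ u₀ τ x₂ t with hν₂
  refine ⟨q, hq, ?_⟩
  set c : ℝ := (a + b) / 2 with hc
  have hq' : ∀ᶠ n in atTop, q n < c :=
    hq.eventually (Filter.Tendsto.eventually_lt_const (by simp only [hc]; linarith) tendsto_id)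
  have hp' : ∀ᶠ n in atTop, c < p n :=
    hp.eventually (Filter.Tendsto.eventually_const_lt (by simp only [hc]; linarith) tendsto_id)
  have hnu1 := fun z => nu_le ρ u₀ U₀ τ t x₁ hmom humeas hu z
  have hnu2 := fun z => nu_le ρ u₀ U₀ τ t x₂ hmom humeas hu z
  have key : ∀ᶠ n in atTop,
      (Fpot ρ u₀ τ (q n) x₁ t - ν₁) + (Fpot ρ u₀ τ (p n) x₂ t - ν₂)
        ≤ (Fpot ρ u₀ τ (q n) x₂ t - ν₂) + (Fpot ρ u₀ τ (p n) x₁ t - ν₁) := by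
    filter_upwards [hq', hp'] with n h1 h2
    have hm : m0 ρ (q n) ≤ m0 ρ (p n) := m0_mono ρ (h1.trans h2).le
    rw [Fpot_shift ρ u₀ U₀ τ t x₁ x₂ (q n) hmom humeas hu,
      Fpot_shift ρ u₀ U₀ τ t x₁ x₂ (p n) hmom humeas hu]
    have := mul_le_mul_of_nonneg_left hm (sub_pos.mpr hx).le
    linarith
  have hW : Tendsto (fun n => (Fpot ρ u₀ τ (q n) x₂ t - ν₂)
      + (Fpot ρ u₀ τ (p n) x₁ t - ν₁)) atTop (𝓝 0) := by
    have := (hFq.sub (tendsto_const_nhds (x := ν₂))).add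
      (hFp.sub (tendsto_const_nhds (x := ν₁)))
    simpa using this
  have hDE : Tendsto (fun n => (Fpot ρ u₀ τ (q n) x₁ t - ν₁)
      + (Fpot ρ u₀ τ (p n) x₂ t - ν₂)) atTop (𝓝 0) := by
    refine tendsto_of_tendsto_of_tendsto_of_le_of_le' tendsto_const_nhds hW ?_ key
    exact Eventually.of_forall fun n =>
      add_nonneg (sub_nonneg.mpr (hnu1 (q n))) (sub_nonneg.mpr (hnu2 (p n)))
  have hD : Tendsto (fun n => Fpot ρ u₀ τ (q n) x₁ t - ν₁) atTop (𝓝 0) := by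
    refine tendsto_of_tendsto_of_tendsto_of_le_of_le' tendsto_const_nhds hDE
      (Eventually.of_forall fun n => sub_nonneg.mpr (hnu1 (q n)))
      (Eventually.of_forall fun n => le_add_of_nonneg_right (sub_nonneg.mpr (hnu2 (p n))))
  have := hD.add (tendsto_const_nhds (x := ν₁))
  simpa using this

theorem stmt6 (ρ : Measure ℝ) [IsFiniteMeasure ρ] (u₀ : ℝ → ℝ) (U₀ τ : ℝ)
    (hτ : 0 < τ) (hρ : ρ ≠ 0)
    (hmom : Integrable (fun η : ℝ => η) ρ) (humeas : Measurable u₀)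
    (hu : ∀ᵐ η ∂ρ, |u₀ η| ≤ U₀)
    (hne : ∀ x t : ℝ, 0 < t → (Sset ρ u₀ τ x t ∩ msupp ρ).Nonempty) :
    ∀ t : ℝ, 0 < t → ∀ x₁ x₂ : ℝ, x₁ < x₂ → ystar ρ u₀ τ x₁ t ≤ ystar ρ u₀ τ x₂ t := by
  intro t ht x₁ x₂ hx
  have hA := hne x₁ t ht
  have hB := hne x₂ t ht
  have bddA := Sbdd ρ u₀ U₀ τ t x₁ hmom humeas hu
  unfold ystar
  refine le_csInf hB ?_
  intro b hb
  by_contra hcon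
  push_neg at hcon
  obtain ⟨a, haA⟩ := hA
  have hba : b < a := hcon.trans_le (csInf_le bddA haA)
  have hb1 : b ∈ Sset ρ u₀ τ x₁ t :=
    swap_lemma ρ u₀ U₀ τ t x₁ x₂ a b hmom humeas hu hx hba haA.1 hb.1
  exact absurd (csInf_le bddA ⟨hb1, hb.2⟩) (not_le.mpr hcon)
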